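/- arXiv:2112.00514 — 3 statements merged into one kernel-verified Lean document; each statement's English description precedes it below -/
import Mathlib

section
/- Let 𝔳 be a weakly linked net over a ℤⁿ-quiver Q in a k-linear abelian category. Let I be a nonempty proper collection of arrow types of Q and let v₁, v₂ be vertices with v₂ = I·v₁. If φ^{v₁}_{v₂} is an epimorphism, then φ^{v₂}_{v₁} = 0. -/
/- Background definitions: ℤⁿ-quivers, linked nets, and associated notions,
following Esteves–Santos–Vital, "Quiver representations arising from
degenerations of linear series, II". -/

open CategoryTheory CategoryTheory.Limits

namespace LNet
universe w

section QuiverDefs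

variable {V : Type*} [Quiver.{w+1} V] {n : ℕ}

/-- The number of arrows of type `t` occurring in the path `p`. -/
def typeCount (τ : ∀ {a b : V}, (a ⟶ b) → Fin (n + 1)) :
    ∀ {a b : V}, Quiver.Path a b → Fin (n + 1) → ℕ
  | _, _, Quiver.Path.nil, _ => 0
  | _, _, Quiver.Path.cons p e, t => typeCount τ p t + (if τ e = t then 1 else 0)

variable (τ : ∀ {a b : V}, (a ⟶ b) → Fin (n + 1))

/-- A path is admissible if it contains no arrow of at least one arrow type. -/
def Admissible {a b : V} (p : Quiver.Path a b) : Prop :=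
  ∃ t : Fin (n + 1), typeCount τ p t = 0

/-- A path is simple if it contains at most one arrow of each type. -/
def SimplePath {a b : V} (p : Quiver.Path a b) : Prop :=
  ∀ t : Fin (n + 1), typeCount τ p t ≤ 1

/-- Two paths with the same source have no arrow type in common. -/
def NoCommonType {a b c : V} (p : Quiver.Path a b) (q : Quiver.Path a c) : Prop :=
  ∀ t : Fin (n + 1), ¬(typeCount τ p t ≠ 0 ∧ typeCount τ q t ≠ 0)

/-- The quiver is a `ℤⁿ`-quiver with respect to the partition of its arrow set
into the `n + 1` types given by `τ`. -/
structure IsZnQuiver : Prop where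
  uniqArrow : ∀ (a : V) (t : Fin (n + 1)), ∃! e : Σ b : V, a ⟶ b, τ e.2 = t
  connAdm : ∀ a b : V, ∃ p : Quiver.Path a b, Admissible τ p
  targetEq : ∀ {a b c : V} (p : Quiver.Path a b) (q : Quiver.Path a c),
      b = c ↔ ∃ d : ℤ, ∀ t : Fin (n + 1),
        (typeCount τ p t : ℤ) - (typeCount τ q t : ℤ) = d

/-- `b = I · a`: there is a simple path from `a` to `b` with essential type `I`. -/
def StepBy (I : Set (Fin (n + 1))) (a b : V) : Prop :=
  ∃ p : Quiver.Path a b, SimplePath τ p ∧ ∀ t : Fin (n + 1), typeCount τ p t ≠ 0 ↔ t ∈ I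

/-- Two distinct vertices connected by a simple path are neighbors. -/
def Neighbors (a b : V) : Prop :=
  a ≠ b ∧ ((∃ p : Quiver.Path a b, SimplePath τ p) ∨ (∃ p : Quiver.Path b a, SimplePath τ p))

/-- A polygon is a nonempty finite set of pairwise neighboring vertices. -/
def IsPolygon (Δ : Finset V) : Prop :=
  Δ.Nonempty ∧ ∀ u ∈ Δ, ∀ v ∈ Δ, u ≠ v → Neighbors τ u v

/-- The hull of a set of vertices. -/
def hull (H : Set V) : Set V :=
  {v | ∀ t : Fin (n + 1), ∃ z ∈ H, ∃ p : Quiver.Path z v, typeCount τ p t = 0}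

/-- `w` is the shadow of `v` in `H`: `w ∈ H` and each `z ∈ H` is connected to `v`
by an admissible path through `w`. -/
def IsShadow (H : Set V) (v w : V) : Prop :=
  w ∈ H ∧ ∀ z ∈ H, ∃ (p : Quiver.Path z w) (q : Quiver.Path w v), Admissible τ (p.comp q)

/-- `v` is a bridge of `v₁` and `v₂`: there are simple admissible paths from `v`
to `v₁` and to `v₂` with no arrow type in common. -/
def IsBridge (v₁ v₂ v : V) : Prop :=
  ∃ (γ₁ : Quiver.Path v v₁) (γ₂ : Quiver.Path v v₂),
    SimplePath τ γ₁ ∧ Admissible τ γ₁ ∧ SimplePath τ γ₂ ∧ Admissible τ γ₂ ∧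
      NoCommonType τ γ₁ γ₂

/-- Two distinct vertices are weakly neighbors if they admit a bridge. -/
def WeaklyNeighbors (v₁ v₂ : V) : Prop :=
  v₁ ≠ v₂ ∧ ∃ v : V, IsBridge τ v₁ v₂ v

/-- Composition of a chain of paths. -/
def chainComp (v : ℕ → V) (α : ∀ i : ℕ, Quiver.Path (v i) (v (i + 1))) :
    ∀ m : ℕ, Quiver.Path (v 0) (v m)
  | 0 => Quiver.Path.nil
  | (m + 1) => (chainComp v α m).comp (α m)

end QuiverDefs

section AbelianDefs

variable {k : Type*} [Field k]
variable {V : Type*} [Quiver.{w+1} V] {n : ℕ}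
variable {C : Type*} [Category C] [Abelian C] [Linear k C]

/-- The composition of the morphisms of `F` along a path. -/
def mapAlong (F : Prefunctor V C) : ∀ {a b : V}, Quiver.Path a b → (F.obj a ⟶ F.obj b)
  | _, _, Quiver.Path.nil => 𝟙 _
  | _, _, Quiver.Path.cons p e => mapAlong F p ≫ F.map e

variable (k) (τ : ∀ {a b : V}, (a ⟶ b) → Fin (n + 1))

/-- A weakly linked net: maps along two paths with the same endpoints, the second
admissible, agree up to a scalar, and maps along minimal circuits vanish. -/
structure IsWeaklyLinkedNet (F : Prefunctor V C) : Prop where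
  scalar : ∀ {a b : V} (γ₁ γ₂ : Quiver.Path a b), Admissible τ γ₂ →
    ∃ c : k, mapAlong F γ₁ = c • mapAlong F γ₂
  circuit : ∀ {a b : V} (γ : Quiver.Path a b), SimplePath τ γ → ¬ Admissible τ γ →
    mapAlong F γ = 0

/-- A linked net: a weakly linked net such that two admissible paths leaving the
same vertex with no arrow type in common have trivially intersecting kernels. -/
def IsLinkedNet (F : Prefunctor V C) : Prop :=
  IsWeaklyLinkedNet k τ F ∧
    ∀ {a b c : V} (γ₁ : Quiver.Path a b) (γ₂ : Quiver.Path a c),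
      Admissible τ γ₁ → Admissible τ γ₂ → NoCommonType τ γ₁ γ₂ →
      ∀ {T : C} (h : T ⟶ F.obj a),
        h ≫ mapAlong F γ₁ = 0 → h ≫ mapAlong F γ₂ = 0 → h = 0

variable {k}

/-- The class `φ^u_v` is zero. -/
def PhiZero (F : Prefunctor V C) (u v : V) : Prop :=
  ∀ p : Quiver.Path u v, Admissible τ p → mapAlong F p = 0

/-- Two vertices are unrelated for the net if the classes `φ^u_v` and `φ^v_u` vanish. -/
def Unrelated (F : Prefunctor V C) (u v : V) : Prop :=
  PhiZero τ F u v ∧ PhiZero τ F v u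

/-- The net is 1-generated by `H`. -/
def OneGenBy (F : Prefunctor V C) (H : Set V) : Prop :=
  ∀ v : V, ∃ u ∈ H, ∃ p : Quiver.Path u v, Epi (mapAlong F p)

/-- The net is generated by `H`. -/
def GeneratedBy (F : Prefunctor V C) (H : Set V) : Prop :=
  ∀ v : V, ∃ s : Finset ((u : V) × Quiver.Path u v),
    (∀ x ∈ s, x.1 ∈ H) ∧ s.sup (fun x => imageSubobject (mapAlong F x.2)) = ⊤

/-- The net is finitely generated. -/
def FinitelyGenerated (F : Prefunctor V C) : Prop :=
  ∃ H : Set V, H.Finite ∧ GeneratedBy F H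

/-- All objects of the net are simple objects. -/
def AllSimple (F : Prefunctor V C) : Prop := ∀ v : V, Simple (F.obj v)

/-- The net is locally finite. -/
def LocallyFinite (F : Prefunctor V C) : Prop :=
  ∀ v : V, ∃ ℓ : ℕ, ∀ (u : V) (p : Quiver.Path u v), ℓ < p.length → mapAlong F p = 0

/-- The net is pure: every epimorphism between associated objects is an isomorphism. -/
def PureRep (F : Prefunctor V C) : Prop :=
  ∀ (u v : V) (f : F.obj u ⟶ F.obj v), Epi f → IsIso f

/-- The net is exact: `Im φ^{v₁}_{v₂} = Ker φ^{v₂}_{v₁}` for all neighbors. -/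
def ExactRep (F : Prefunctor V C) : Prop :=
  ∀ u v : V, Neighbors τ u v → ∀ (p : Quiver.Path u v) (q : Quiver.Path v u),
    Admissible τ p → Admissible τ q →
      imageSubobject (mapAlong F p) = kernelSubobject (mapAlong F q)

/-- The representation `𝔳_H` assembled from a shadow function `sh` and maps `Gmap`. -/
def shadowPrefunctor (F : Prefunctor V C) (sh : V → V)
    (Gmap : ∀ {a b : V}, (a ⟶ b) → (F.obj (sh a) ⟶ F.obj (sh b))) : Prefunctor V C where
  obj v := F.obj (sh v)
  map e := Gmap e

variable (k)

/-- `(sh, Gmap)` is the data of an `H`-shadow representation of `F`. -/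
def IsShadowRep (H : Set V) (F : Prefunctor V C) (sh : V → V)
    (Gmap : ∀ {a b : V}, (a ⟶ b) → (F.obj (sh a) ⟶ F.obj (sh b))) : Prop :=
  (∀ v : V, IsShadow τ H v (sh v)) ∧
    ∀ {a b : V} (e : a ⟶ b),
      ((¬ ∃ (p : Quiver.Path (sh a) a) (q : Quiver.Path a b), Admissible τ (p.comp q)) →
        Gmap e = 0) ∧
      ((∃ (p : Quiver.Path (sh a) a) (q : Quiver.Path a b), Admissible τ (p.comp q)) →
        ∃ (c : k) (ρ : Quiver.Path (sh a) (sh b)), c ≠ 0 ∧ Admissible τ ρ ∧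
          Gmap e = c • mapAlong F ρ)

end AbelianDefs

section VectorDefs

variable {k : Type*} [Field k]
variable {V : Type*} [Quiver.{w+1} V] {n : ℕ}
variable {W : V → Type*} [∀ v, AddCommGroup (W v)] [∀ v, Module k (W v)]

/-- The composition of the linear maps of the representation along a path. -/
def mapAlongL (φ : ∀ {a b : V}, (a ⟶ b) → (W a →ₗ[k] W b)) :
    ∀ {a b : V}, Quiver.Path a b → (W a →ₗ[k] W b)
  | _, _, Quiver.Path.nil => LinearMap.id
  | _, _, Quiver.Path.cons p e => (φ e).comp (mapAlongL φ p)

variable (k) (τ : ∀ {a b : V}, (a ⟶ b) → Fin (n + 1))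
variable (φ : ∀ {a b : V}, (a ⟶ b) → (W a →ₗ[k] W b))

/-- A weakly linked net of vector spaces. -/
structure IsWeaklyLinkedNetL : Prop where
  scalar : ∀ {a b : V} (γ₁ γ₂ : Quiver.Path a b), Admissible τ γ₂ →
    ∃ c : k, mapAlongL φ γ₁ = c • mapAlongL φ γ₂
  circuit : ∀ {a b : V} (γ : Quiver.Path a b), SimplePath τ γ → ¬ Admissible τ γ →
    mapAlongL φ γ = 0

/-- A linked net of vector spaces. -/
def IsLinkedNetL : Prop :=
  IsWeaklyLinkedNetL k τ φ ∧
    ∀ {a b c : V} (γ₁ : Quiver.Path a b) (γ₂ : Quiver.Path a c),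
      Admissible τ γ₁ → Admissible τ γ₂ → NoCommonType τ γ₁ γ₂ →
      LinearMap.ker (mapAlongL φ γ₁) ⊓ LinearMap.ker (mapAlongL φ γ₂) = ⊥

/-- All spaces are nonzero of the same finite dimension. -/
def PureNontrivialL : Prop :=
  (∀ v : V, 0 < Module.finrank k (W v)) ∧
    ∀ u v : V, Module.finrank k (W u) = Module.finrank k (W v)

/-- The net of vector spaces is 1-generated by `H`. -/
def OneGenL (H : Set V) : Prop :=
  ∀ v : V, ∃ u ∈ H, ∃ p : Quiver.Path u v, Function.Surjective (mapAlongL φ p)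

/-- The net of vector spaces is generated by `H`. -/
def GeneratedL (H : Set V) : Prop :=
  ∀ v : V, ∃ s : Finset ((u : V) × Quiver.Path u v),
    (∀ x ∈ s, x.1 ∈ H) ∧ (⨆ x ∈ s, LinearMap.range (mapAlongL φ x.2)) = ⊤

/-- The net of vector spaces is finitely generated. -/
def FinGenL : Prop := ∃ H : Set V, H.Finite ∧ GeneratedL k φ H

/-- A subrepresentation of pure dimension one: a point of `LP(𝔳)`. -/
def IsLP (L : ∀ v : V, Submodule k (W v)) : Prop :=
  (∀ v : V, Module.finrank k (L v) = 1) ∧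
    ∀ (a b : V) (e : a ⟶ b), (L a).map (φ e) ≤ L b

/-- A point of `LP_H(𝔳)`: a tuple of one-dimensional subspaces indexed by `H` such
that the image of the subspace at `v` along any admissible path from `v` to `u`
is contained in the subspace at `u`, for all `v, u ∈ H`. -/
def IsLPH (H : Set V) (M : (v : V) → v ∈ H → Submodule k (W v)) : Prop :=
  (∀ (v : V) (hv : v ∈ H), Module.finrank k (M v hv) = 1) ∧
    ∀ (v : V) (hv : v ∈ H) (u : V) (hu : u ∈ H) (p : Quiver.Path v u),
      Admissible τ p → (M v hv).map (mapAlongL φ p) ≤ M u hu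

/-- The family `L` is generated by the vertex `v₀`. -/
def GenByVertexL (v₀ : V) (L : ∀ v : V, Submodule k (W v)) : Prop :=
  ∀ u : V, L u = ⨆ p : Quiver.Path v₀ u, (L v₀).map (mapAlongL φ p)

/-- The net of vector spaces is exact. -/
def ExactL : Prop :=
  ∀ u v : V, Neighbors τ u v → ∀ (p : Quiver.Path u v) (q : Quiver.Path v u),
    Admissible τ p → Admissible τ q →
      LinearMap.range (mapAlongL φ p) = LinearMap.ker (mapAlongL φ q)

end VectorDefs

section Aux

variable {V : Type*} [Quiver.{w+1} V] {n : ℕ}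

theorem typeCount_comp (τ : ∀ {a b : V}, (a ⟶ b) → Fin (n + 1)) {a b c : V}
    (p : Quiver.Path a b) (q : Quiver.Path b c) (t : Fin (n + 1)) :
    typeCount τ (p.comp q) t = typeCount τ p t + typeCount τ q t := by
  induction q with
  | nil => simp [typeCount]
  | cons q e ih => simp [typeCount, Quiver.Path.comp_cons, ih]; omega

theorem exists_path_of_finset (τ : ∀ {a b : V}, (a ⟶ b) → Fin (n + 1))
    (hZ : IsZnQuiver τ) (a : V) (J : Finset (Fin (n + 1))) :
    ∃ (b : V) (p : Quiver.Path a b),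
      ∀ t, typeCount τ p t = if t ∈ J then 1 else 0 := by
  classical
  induction J using Finset.induction with
  | empty => exact ⟨a, Quiver.Path.nil, fun t => by simp [typeCount]⟩
  | @insert t0 J ht0 ih =>
    obtain ⟨b, p, hp⟩ := ih
    obtain ⟨e, he, _⟩ := hZ.uniqArrow b t0
    refine ⟨e.1, p.cons e.2, fun t => ?_⟩
    simp only [typeCount, hp, he]
    by_cases h : t = t0
    · subst h; simp [ht0]
    · simp [h, Ne.symm h]

theorem mapAlong_comp {C : Type*} [Category C] [Abelian C]
    (F : Prefunctor V C) {a b c : V} (p : Quiver.Path a b) (q : Quiver.Path b c) :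
    mapAlong F (p.comp q) = mapAlong F p ≫ mapAlong F q := by
  induction q with
  | nil => simp [mapAlong]
  | cons q e ih => simp [mapAlong, Quiver.Path.comp_cons, ih]

end Aux

/-- Let `𝔳` be a weakly linked net over a `ℤⁿ`-quiver `Q` in a
`k`-linear abelian category. Let `I` be a nonempty proper collection of arrow
types of `Q` and let `v₁`, `v₂` be vertices with `v₂ = I·v₁`. If `φ^{v₁}_{v₂}`
is an epimorphism, then `φ^{v₂}_{v₁} = 0`. -/
theorem statement_0
    {k : Type*} [Field k] {V : Type*} [Quiver.{w+1} V] {n : ℕ}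
    {C : Type*} [Category C] [Abelian C] [Linear k C]
    (τ : ∀ {a b : V}, (a ⟶ b) → Fin (n + 1)) (hZ : IsZnQuiver τ)
    (F : Prefunctor V C) (hF : IsWeaklyLinkedNet k τ F)
    (I : Set (Fin (n + 1))) (hI₁ : I.Nonempty) (hI₂ : I ≠ Set.univ)
    (v₁ v₂ : V) (h12 : StepBy τ I v₁ v₂)
    (hepi : ∀ p : Quiver.Path v₁ v₂, Admissible τ p → Epi (mapAlong F p)) :
    PhiZero τ F v₂ v₁ := by
  classical
  obtain ⟨p, hsimp, htype⟩ := h12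
  obtain ⟨t0, ht0⟩ := (Set.ne_univ_iff_exists_notMem I).mp hI₂
  have hpadm : Admissible τ p :=
    ⟨t0, by by_contra h; exact ht0 ((htype t0).mp h)⟩
  set J : Finset (Fin (n + 1)) := Finset.univ.filter (fun t => t ∉ I) with hJ
  obtain ⟨b, p', hp'⟩ := exists_path_of_finset τ hZ v₂ J
  have hcount : ∀ t, typeCount τ (p.comp p') t = 1 := by
    intro t
    rw [typeCount_comp]
    by_cases ht : t ∈ I
    · have h1 : typeCount τ p t = 1 :=
        le_antisymm (hsimp t) (Nat.one_le_iff_ne_zero.mpr ((htype t).mpr ht))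
      have h2 : typeCount τ p' t = 0 := by simp [hp', hJ, ht]
      omega
    · have h1 : typeCount τ p t = 0 := by
        by_contra h; exact ht ((htype t).mp h)
      have h2 : typeCount τ p' t = 1 := by simp [hp', hJ, ht]
      omega
  have hb : b = v₁ :=
    (hZ.targetEq (p.comp p') Quiver.Path.nil).mpr
      ⟨1, fun t => by simp [hcount, typeCount]⟩
  subst hb
  have hsimp' : SimplePath τ (p.comp p') := fun t => (hcount t).le
  have hnadm : ¬ Admissible τ (p.comp p') := by
    rintro ⟨t, ht⟩; rw [hcount t] at ht; exact one_ne_zero ht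
  have hz := hF.circuit (p.comp p') hsimp' hnadm
  rw [mapAlong_comp] at hz
  haveI := hepi p hpadm
  have hp'0 : mapAlong F p' = 0 :=
    (cancel_epi (mapAlong F p)).mp (by rw [hz, comp_zero])
  obtain ⟨t1, ht1⟩ := hI₁
  have hp'adm : Admissible τ p' := ⟨t1, by simp [hp', hJ, ht1]⟩
  intro q hq
  obtain ⟨c, hc⟩ := hF.scalar q p' hp'adm
  rw [hc, hp'0, smul_zero]

end LNet
end

section
/- Let 𝔳 be a pure nontrivial weakly linked net of finite-dimensional k-vector spaces over a ℤⁿ-quiver Q. Let H₁ and H₂ be finite collections of vertices 1-generating 𝔳 with P(H₁) = H₁. Then: (a) for every vertex v of Q, φ^{w_v}_v is an isomorphism, where w_v is the shadow of v in H₁; (b) the map Ψ^{H₁}_{H₂} : ∏_{v∈H₁} ℙ(V_v) → ∏_{v∈H₂} ℙ(V_v) sending ([s_v])_{v∈H₁} to ([φ^{w_v}_v(s_{w_v})])_{v∈H₂} is well defined and maps LP_{H₁}(𝔳) into LP_{H₂}(𝔳); (c) the restriction map Ψ^𝔳_{H₁} : LP(𝔳) → LP_{H₁}(𝔳) is bijective;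 (d) Ψ^𝔳_{H₂} = Ψ^{H₁}_{H₂} ∘ Ψ^𝔳_{H₁}. -/
/- Background definitions: ℤⁿ-quivers, linked nets, and associated notions,
following Esteves–Santos–Vital, "Quiver representations arising from
degenerations of linear series, II". -/

open CategoryTheory CategoryTheory.Limits

namespace LNet
universe w

section AuxHelpers

variable {V : Type*} [Quiver.{w+1} V] {n : ℕ}

theorem typeCount_nil (τ : ∀ {a b : V}, (a ⟶ b) → Fin (n + 1)) {a : V} (t : Fin (n + 1)) :
    typeCount τ (Quiver.Path.nil : Quiver.Path a a) t = 0 := by simp [typeCount]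

theorem typeCount_cons (τ : ∀ {a b : V}, (a ⟶ b) → Fin (n + 1)) {a b c : V}
    (p : Quiver.Path a b) (e : b ⟶ c) (t : Fin (n + 1)) :
    typeCount τ (p.cons e) t = typeCount τ p t + (if τ e = t then 1 else 0) := by
  simp [typeCount]

variable {k : Type*} [Field k] {W : V → Type*} [∀ v, AddCommGroup (W v)] [∀ v, Module k (W v)]

theorem mapAlongL_nil (φ : ∀ {a b : V}, (a ⟶ b) → (W a →ₗ[k] W b)) {a : V} :
    mapAlongL φ (Quiver.Path.nil : Quiver.Path a a) = LinearMap.id := by simp [mapAlongL]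

theorem mapAlongL_cons (φ : ∀ {a b : V}, (a ⟶ b) → (W a →ₗ[k] W b)) {a b c : V}
    (p : Quiver.Path a b) (e : b ⟶ c) :
    mapAlongL φ (p.cons e) = (φ e).comp (mapAlongL φ p) := by simp [mapAlongL]

theorem mapAlongL_comp (φ : ∀ {a b : V}, (a ⟶ b) → (W a →ₗ[k] W b)) {a b c : V}
    (p : Quiver.Path a b) (q : Quiver.Path b c) :
    mapAlongL φ (p.comp q) = (mapAlongL φ q).comp (mapAlongL φ p) := by
  induction q with
  | nil => simp only [Quiver.Path.comp_nil, mapAlongL_nil, LinearMap.id_comp]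
  | cons q e ih =>
      rw [Quiver.Path.comp_cons, mapAlongL_cons, ih, mapAlongL_cons, LinearMap.comp_assoc]

theorem map_smul_le {M N : Type*} [AddCommGroup M] [Module k M] [AddCommGroup N] [Module k N]
    (c : k) (f : M →ₗ[k] N) (p : Submodule k M) : p.map (c • f) ≤ p.map f := by
  rintro _ ⟨x, hx, rfl⟩
  exact ⟨c • x, p.smul_mem c hx, by simp⟩

theorem map_smul_eq {M N : Type*} [AddCommGroup M] [Module k M] [AddCommGroup N] [Module k N]
    (c : k) (f : M →ₗ[k] N) (p : Submodule k M) (hc : c ≠ 0) : p.map (c • f) = p.map f := by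
  refine le_antisymm (map_smul_le c f p) ?_
  have h : f = c⁻¹ • (c • f) := by rw [smul_smul, inv_mul_cancel₀ hc, one_smul]
  calc p.map f = p.map (c⁻¹ • (c • f)) := by rw [← h]
    _ ≤ p.map (c • f) := map_smul_le _ _ _

end AuxHelpers

/-- properties of the maps `Ψ^{H₁}_{H₂}` and `Ψ^𝔳_{H}` for a pure
nontrivial weakly linked net of finite-dimensional `k`-vector spaces over a
`ℤⁿ`-quiver, where `H₁`, `H₂` are finite 1-generating collections of vertices
and `P(H₁) = H₁`. Part (a): `φ^{w_v}_v` is an isomorphism for the shadow `w_v`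
of `v` in `H₁`; part (b): `Ψ^{H₁}_{H₂}` is well defined (independent of all
choices, sends points of projective spaces to points of projective spaces) and
maps `LP_{H₁}(𝔳)` into `LP_{H₂}(𝔳)`; part (c): `Ψ^𝔳_{H₁}` is bijective;
part (d): `Ψ^𝔳_{H₂} = Ψ^{H₁}_{H₂} ∘ Ψ^𝔳_{H₁}`. -/
theorem statement_5
    {k : Type*} [Field k] {V : Type*} [Quiver.{w+1} V] {n : ℕ}
    {W : V → Type*} [∀ v, AddCommGroup (W v)] [∀ v, Module k (W v)]
    [∀ v, FiniteDimensional k (W v)]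
    (τ : ∀ {a b : V}, (a ⟶ b) → Fin (n + 1)) (hZ : IsZnQuiver τ)
    (φ : ∀ {a b : V}, (a ⟶ b) → (W a →ₗ[k] W b))
    (hW : IsWeaklyLinkedNetL k τ φ) (hpure : PureNontrivialL k (W := W))
    (H₁ H₂ : Set V) (hf₁ : H₁.Finite) (hf₂ : H₂.Finite)
    (hg₁ : OneGenL k φ H₁) (hg₂ : OneGenL k φ H₂)
    (hhull : hull τ H₁ = H₁)
    (sh : V → V) (hsh : ∀ v : V, IsShadow τ H₁ v (sh v))
    (sel : ∀ v : V, Quiver.Path (sh v) v) (hsel : ∀ v : V, Admissible τ (sel v)) :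
    -- (a)
    (∀ (v u : V), IsShadow τ H₁ v u → ∀ p : Quiver.Path u v, Admissible τ p →
      Function.Bijective (mapAlongL φ p)) ∧
    -- (b): well-definedness of Ψ^{H₁}_{H₂} ...
    (∀ (M : (u : V) → u ∈ H₁ → Submodule k (W u)) (v u u' : V)
      (h : IsShadow τ H₁ v u) (h' : IsShadow τ H₁ v u')
      (p : Quiver.Path u v) (p' : Quiver.Path u' v),
      Admissible τ p → Admissible τ p' →
      (M u h.1).map (mapAlongL φ p) = (M u' h'.1).map (mapAlongL φ p')) ∧
    (∀ (v : V) (L : Submodule k (W (sh v))), Module.finrank k L = 1 →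
      Module.finrank k (L.map (mapAlongL φ (sel v))) = 1) ∧
    -- ... and Ψ^{H₁}_{H₂} maps LP_{H₁}(𝔳) into LP_{H₂}(𝔳)
    (∀ M : (u : V) → u ∈ H₁ → Submodule k (W u), IsLPH k τ φ H₁ M →
      IsLPH k τ φ H₂ (fun v _ => (M (sh v) (hsh v).1).map (mapAlongL φ (sel v)))) ∧
    -- (c): Ψ^𝔳_{H₁} : LP(𝔳) → LP_{H₁}(𝔳), induced by restriction, is bijective
    (∃ f : {L : ∀ u : V, Submodule k (W u) // IsLP k φ L} →
        {M : (u : V) → u ∈ H₁ → Submodule k (W u) // IsLPH k τ φ H₁ M},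
      (∀ L (u : V) (hu : u ∈ H₁), (f L).1 u hu = L.1 u) ∧ Function.Bijective f) ∧
    -- (d): Ψ^𝔳_{H₂} = Ψ^{H₁}_{H₂} ∘ Ψ^𝔳_{H₁}
    (∀ L : ∀ u : V, Submodule k (W u), IsLP k φ L →
      ∀ v ∈ H₂, (L (sh v)).map (mapAlongL φ (sel v)) = L v) := by
  classical
  have hnt : ∀ v : V, Nontrivial (W v) := by
    intro v
    exact Module.nontrivial_of_finrank_pos (hpure.1 v)
  -- Part (a)
  have haveA : ∀ (v u : V), IsShadow τ H₁ v u → ∀ p : Quiver.Path u v, Admissible τ p →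
      Function.Bijective (mapAlongL φ p) := by
    intro v u h p hp
    obtain ⟨z, hz, q, hq⟩ := hg₁ v
    obtain ⟨r, s, hrs⟩ := h.2 z hz
    obtain ⟨c, hc⟩ := hW.scalar q (r.comp s) hrs
    have hc0 : c ≠ 0 := by
      rintro rfl
      rw [zero_smul] at hc
      have hzero : ∀ y : W v, y = 0 := by
        intro y
        obtain ⟨x, hx⟩ := hq y
        rw [hc] at hx
        simpa using hx.symm
      have hsub : Subsingleton (W v) := ⟨fun a b => by rw [hzero a, hzero b]⟩
      have := hpure.1 v
      rw [Module.finrank_zero_of_subsingleton] at this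
      exact absurd this (lt_irrefl 0)
    have hsurj_rs : Function.Surjective (mapAlongL φ (r.comp s)) := by
      intro y
      obtain ⟨x, hx⟩ := hq y
      rw [hc] at hx
      refine ⟨c • x, ?_⟩
      rw [map_smul]
      simpa using hx
    rw [mapAlongL_comp] at hsurj_rs
    have hssurj : Function.Surjective (mapAlongL φ s) := by
      rw [LinearMap.coe_comp] at hsurj_rs
      exact hsurj_rs.of_comp
    have hsinj : Function.Injective (mapAlongL φ s) :=
      (LinearMap.injective_iff_surjective_of_finrank_eq_finrank (hpure.2 u v)).mpr hssurj
    have hsne : mapAlongL φ s ≠ 0 := by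
      intro h0
      have := hnt u
      obtain ⟨x, hx⟩ := exists_ne (0 : W u)
      exact hx (hsinj (by rw [h0]; simp))
    obtain ⟨c₂, hc₂⟩ := hW.scalar s p hp
    have hc₂0 : c₂ ≠ 0 := by
      rintro rfl
      rw [zero_smul] at hc₂
      exact hsne hc₂
    have hp_eq : mapAlongL φ p = c₂⁻¹ • mapAlongL φ s := by
      rw [hc₂, smul_smul, inv_mul_cancel₀ hc₂0, one_smul]
    rw [hp_eq]
    constructor
    · intro x y hxy
      simp only [LinearMap.smul_apply] at hxy
      exact hsinj (smul_right_injective (W v) (inv_ne_zero hc₂0) hxy)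
    · intro y
      obtain ⟨x, hx⟩ := hssurj (c₂ • y)
      refine ⟨x, ?_⟩
      simp only [LinearMap.smul_apply, hx, smul_smul, inv_mul_cancel₀ hc₂0, one_smul]
  -- uniqueness of shadows
  have huniq : ∀ (v u u' : V), IsShadow τ H₁ v u → IsShadow τ H₁ v u' → u = u' := by
    intro v u u' h h'
    obtain ⟨r, s, hrs⟩ := h.2 u' h'.1
    obtain ⟨r', s', hrs'⟩ := h'.2 u h.1
    obtain ⟨t₀, ht₀⟩ := hrs
    rw [typeCount_comp] at ht₀
    have hrt₀ : typeCount τ r t₀ = 0 := (Nat.add_eq_zero.mp ht₀).1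
    have hst₀ : typeCount τ s t₀ = 0 := (Nat.add_eq_zero.mp ht₀).2
    obtain ⟨t₁, ht₁⟩ := hrs'
    rw [typeCount_comp] at ht₁
    have hr't₁ : typeCount τ r' t₁ = 0 := (Nat.add_eq_zero.mp ht₁).1
    have hs't₁ : typeCount τ s' t₁ = 0 := (Nat.add_eq_zero.mp ht₁).2
    obtain ⟨D, hD⟩ := (hZ.targetEq (r.comp r') (Quiver.Path.nil : Quiver.Path u' u')).mp rfl
    obtain ⟨A, hA⟩ := (hZ.targetEq (r.comp s) s').mp rfl
    have h1 := hA t₀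
    have h2 := hA t₁
    rw [typeCount_comp] at h1 h2
    have hrt₁ : typeCount τ r t₁ = 0 := by omega
    have hr0 : ∀ t, typeCount τ r t = 0 := by
      intro t
      have g1 := hD t₁
      have g2 := hD t
      rw [typeCount_comp, typeCount_nil] at g1 g2
      omega
    refine (hZ.targetEq r (Quiver.Path.nil : Quiver.Path u' u')).mpr ⟨0, fun t => ?_⟩
    rw [hr0 t, typeCount_nil]
    simp
  -- part (b2): images of 1-dimensional spaces
  have hb2 : ∀ (v : V) (L : Submodule k (W (sh v))), Module.finrank k L = 1 →
      Module.finrank k (L.map (mapAlongL φ (sel v))) = 1 := by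
    intro v L hL
    have hbij := haveA v (sh v) (hsh v) (sel v) (hsel v)
    rw [← LinearEquiv.finrank_eq (Submodule.equivMapOfInjective _ hbij.1 L)]
    exact hL
  -- key closure lemma for families coming from LP_{H₁}
  have hkey : ∀ (M : (u : V) → u ∈ H₁ → Submodule k (W u)), IsLPH k τ φ H₁ M →
      ∀ (a b : V) (q : Quiver.Path a b),
        ((M (sh a) (hsh a).1).map (mapAlongL φ (sel a))).map (mapAlongL φ q) ≤
          (M (sh b) (hsh b).1).map (mapAlongL φ (sel b)) := by
    intro M hM a b q
    obtain ⟨r, s, hrs⟩ := (hsh b).2 (sh a) (hsh a).1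
    obtain ⟨c, hc⟩ := hW.scalar ((sel a).comp q) (r.comp s) hrs
    have hra : Admissible τ r := by
      obtain ⟨t, ht⟩ := hrs
      rw [typeCount_comp] at ht
      exact ⟨t, by omega⟩
    obtain ⟨c₂, hc₂⟩ := hW.scalar s (sel b) (hsel b)
    calc ((M (sh a) (hsh a).1).map (mapAlongL φ (sel a))).map (mapAlongL φ q)
        = (M (sh a) (hsh a).1).map (mapAlongL φ ((sel a).comp q)) := by
          rw [mapAlongL_comp, Submodule.map_comp]
      _ = (M (sh a) (hsh a).1).map (c • mapAlongL φ (r.comp s)) := by rw [hc]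
      _ ≤ (M (sh a) (hsh a).1).map (mapAlongL φ (r.comp s)) := map_smul_le _ _ _
      _ = ((M (sh a) (hsh a).1).map (mapAlongL φ r)).map (mapAlongL φ s) := by
          rw [mapAlongL_comp, Submodule.map_comp]
      _ ≤ (M (sh b) (hsh b).1).map (mapAlongL φ s) :=
          Submodule.map_mono (hM.2 (sh a) (hsh a).1 (sh b) (hsh b).1 r hra)
      _ = (M (sh b) (hsh b).1).map (c₂ • mapAlongL φ (sel b)) := by rw [← hc₂]
      _ ≤ (M (sh b) (hsh b).1).map (mapAlongL φ (sel b)) := map_smul_le _ _ _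
  -- closure of LPs along paths
  have hpathLe : ∀ (L : ∀ v : V, Submodule k (W v)), IsLP k φ L →
      ∀ (a b : V) (q : Quiver.Path a b), (L a).map (mapAlongL φ q) ≤ L b := by
    intro L hL a b q
    induction q with
    | nil =>
        rw [mapAlongL_nil, Submodule.map_id]
    | cons q e ih =>
        rw [mapAlongL_cons, Submodule.map_comp]
        exact le_trans (Submodule.map_mono ih) (hL.2 _ _ e)
  -- part (d) for arbitrary vertices
  have hd : ∀ (L : ∀ u : V, Submodule k (W u)), IsLP k φ L → ∀ v : V,
      (L (sh v)).map (mapAlongL φ (sel v)) = L v := by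
    intro L hL v
    have hle := hpathLe L hL (sh v) v (sel v)
    have hbij := haveA v (sh v) (hsh v) (sel v) (hsel v)
    refine Submodule.eq_of_le_of_finrank_le hle ?_
    rw [hL.1 v, ← LinearEquiv.finrank_eq (Submodule.equivMapOfInjective _ hbij.1 (L (sh v))),
      hL.1 (sh v)]
  refine ⟨haveA, ?_, hb2, ?_, ?_, ?_⟩
  · -- part (b1)
    intro M v u u' h h' p p' hp hp'
    have heq := huniq v u u' h h'
    subst heq
    obtain ⟨c, hc⟩ := hW.scalar p p' hp'
    have hpb := haveA v u h p hp
    have hcne : c ≠ 0 := by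
      rintro rfl
      rw [zero_smul] at hc
      have := hnt u
      obtain ⟨x, hx⟩ := exists_ne (0 : W u)
      exact hx (hpb.1 (by rw [hc]; simp))
    rw [hc, map_smul_eq _ _ _ hcne]
  · -- part (b3)
    intro M hM
    constructor
    · intro v hv
      exact hb2 v _ (hM.1 (sh v) (hsh v).1)
    · intro v hv u hu p hp
      exact hkey M hM v u p
  · -- part (c)
    refine ⟨fun L => ⟨fun u _ => L.1 u, ⟨fun v hv => L.2.1 v,
      fun v hv u hu p hp => hpathLe L.1 L.2 v u p⟩⟩, fun L u hu => rfl, ?_, ?_⟩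
    · -- injective
      intro L L' hLL'
      have hmem : ∀ u, u ∈ H₁ → L.1 u = L'.1 u := by
        intro u hu
        have h1 := congrArg Subtype.val hLL'
        exact congrFun (congrFun h1 u) hu
      apply Subtype.ext
      funext v
      rw [← hd L.1 L.2 v, ← hd L'.1 L'.2 v, hmem (sh v) (hsh v).1]
    · -- surjective
      rintro ⟨M, hM⟩
      have hLP : IsLP k φ (fun v => (M (sh v) (hsh v).1).map (mapAlongL φ (sel v))) := by
        constructor
        · intro v
          exact hb2 v _ (hM.1 (sh v) (hsh v).1)
        · intro a b e
          have h := hkey M hM a b ((Quiver.Path.nil : Quiver.Path a a).cons e)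
          rwa [mapAlongL_cons, mapAlongL_nil, LinearMap.comp_id] at h
      refine ⟨⟨fun v => (M (sh v) (hsh v).1).map (mapAlongL φ (sel v)), hLP⟩, ?_⟩
      apply Subtype.ext
      funext u hu
      have hle : (M (sh u) (hsh u).1).map (mapAlongL φ (sel u)) ≤ M u hu :=
        hM.2 (sh u) (hsh u).1 u hu (sel u) (hsel u)
      refine Submodule.eq_of_le_of_finrank_le hle ?_
      rw [hM.1 u hu, hb2 u _ (hM.1 (sh u) (hsh u).1)]
  · -- part (d)
    intro L hL v hv
    exact hd L hL v

end LNet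
end

section
/- Let k be a field, n ≥ 1, and r₀,…,r_n nonnegative integers with r := r₀ + ⋯ + r_n > 0. Write each vector x ∈ k^r in blocks x = (x_{(0)},…,x_{(n)}) with x_{(ℓ)} ∈ k^{r_ℓ}. For i = 0,…,n−1, let M_i : k^r → k^r be the linear map that is the identity on every block except block i+1, where it is zero; let M_n : k^r → k^r be the linear map that is zero on block 0 and the identity on every other block. Suppose x₀,…,x_n ∈ k^r are all nonzero and satisfy, cyclically (with x_{n+1} := x₀), that M_i x_i and x_{i+1} are linearly dependent (i.e. M_i x_i ∧ x_{i+1} = 0) for each i = 0,…,n. Then there exists i ∈ {0,…,n} such that the block (x_i)_{(j)} with j ≡ i+1 (mod n+1) is nonzero. -/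
/-! If every block `x i (i + 1)` vanished, then `M_i x_i = x_i`, so each `x i` would be a multiple
of `x (i + 1)`; going around the cycle, `x 0` is a multiple of every `x m`, and in particular its
block `m + 1` vanishes for every `m`, i.e. `x 0 = 0`. -/

theorem Fin.exists_smul_eq_of_forall_exists_smul_succ {n : ℕ} {R M : Type*} [Monoid R]
    [MulAction R M] {f : Fin (n + 1) → M} (h : ∀ i, ∃ c : R, f i = c • f (i + 1))
    (m : Fin (n + 1)) : ∃ d : R, f 0 = d • f m := by
  induction m using Fin.induction with
  | zero => exact ⟨1, (one_smul R _).symm⟩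
  | succ i ih =>
    obtain ⟨d, hd⟩ := ih
    obtain ⟨c, hc⟩ := h i.castSucc
    exact ⟨d * c, by rw [hd, hc, Fin.coeSucc_eq_succ, mul_smul]⟩

theorem ite_zero_eq_self_of_apply_eq_zero {ι : Type*} [DecidableEq ι] {β : ι → Type*} [∀ ℓ, Zero (β ℓ)]
    {v : ∀ ℓ, β ℓ} {j : ι} (hv : v j = 0) :
    (fun ℓ => if ℓ = j then (0 : β ℓ) else v ℓ) = v := by
  funext ℓ
  split_ifs with hℓ
  · subst hℓ; exact hv.symm
  · rfl

theorem statement_19_general {k : Type*} [Field k] (n : ℕ)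
    (r : Fin (n + 1) → ℕ)
    (x : Fin (n + 1) → ∀ ℓ : Fin (n + 1), Fin (r ℓ) → k)
    (hx : ∀ i, x i ≠ 0)
    (hdep : ∀ i : Fin (n + 1), ∃ c : k,
      (fun ℓ : Fin (n + 1) => if ℓ = i + 1 then (0 : Fin (r ℓ) → k) else x i ℓ) =
        c • x (i + 1)) :
    ∃ i : Fin (n + 1), x i (i + 1) ≠ 0 := by
  by_contra! hblock
  have hstep : ∀ i, ∃ c : k, x i = c • x (i + 1) := fun i => by
    simpa only [ite_zero_eq_self_of_apply_eq_zero (hblock i)] using hdep i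
  apply hx 0
  funext ℓ
  obtain ⟨d, hd⟩ := Fin.exists_smul_eq_of_forall_exists_smul_succ hstep (ℓ - 1)
  have hzero := hblock (ℓ - 1)
  rw [sub_add_cancel] at hzero
  rw [hd, Pi.smul_apply, hzero, smul_zero, Pi.zero_apply]

/-- Let `k` be a field, `n ≥ 1`, and `r₀, …, r_n` nonnegative
integers with `r := r₀ + ⋯ + r_n > 0`. Vectors of `k^r` are written in blocks,
as elements of `Π ℓ, (Fin (r ℓ) → k)`. For `i = 0, …, n`, let `M_i` be the
linear map that is zero on block `i + 1 (mod n + 1)` and the identity on every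
other block. Suppose `x₀, …, x_n` are all nonzero and satisfy, cyclically, that
`M_i x_i` and `x_{i+1}` are linearly dependent. Then there exists `i` such that
the block of `x_i` indexed by `i + 1 (mod n + 1)` is nonzero. -/
theorem statement_19 {k : Type*} [Field k] (n : ℕ) (hn : 1 ≤ n)
    (r : Fin (n + 1) → ℕ) (hr : 0 < ∑ ℓ, r ℓ)
    (x : Fin (n + 1) → ∀ ℓ : Fin (n + 1), Fin (r ℓ) → k)
    (hx : ∀ i, x i ≠ 0)
    (hdep : ∀ i : Fin (n + 1), ∃ c : k,
      (fun ℓ : Fin (n + 1) => if ℓ = i + 1 then (0 : Fin (r ℓ) → k) else x i ℓ) =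
        c • x (i + 1)) :
    ∃ i : Fin (n + 1), x i (i + 1) ≠ 0 :=
  statement_19_general n r x hx hdep
end
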